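/- arXiv:1401.5125 — 4 statements merged into one kernel-verified Lean document; each statement's English description precedes it below -/
import Mathlib

section
/- Converse bound for one-shot noisy lossy compression: every (M, d, ε) code must satisfy ε ≥ inf over conditional distributions P_{Z|X} of sup over γ ≥ 0 and auxiliary conditional distributions P_{X̄|Z̄} (from the reproduction alphabet to the observation alphabet) of { P[ ı_{X̄|Z̄‖X}(X; Z) + sup_{λ ≥ 0} λ·(d(S, Z) − d) ≥ log M + γ ] − exp(−γ) }, where the probability is computed under the joint law P_S P_{X|S} P_{Z|X} and ı_{X̄|Z̄‖X}(x; z) = log( dP_{X̄|Z̄=z}(x) / dP_X(x) ). -/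
open scoped BigOperators

noncomputable section

/-- `p` is a probability mass function on a finite type. -/
def IsPMF {α : Type*} [Fintype α] (p : α → ℝ) : Prop :=
  (∀ a, 0 ≤ p a) ∧ ∑ a, p a = 1

/-- `W` is a transition probability kernel (a random transformation). -/
def IsKernel {α β : Type*} [Fintype β] (W : α → β → ℝ) : Prop :=
  ∀ a, IsPMF (W a)

private lemma sup_lambda_nonpos (r : ℝ) (hr : r ≤ 0) :
    (⨆ l : {l : ℝ // 0 ≤ l}, ((l.1 * r : ℝ) : EReal)) = 0 := by
  apply le_antisymm
  · refine iSup_le fun l => ?_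
    have h : l.1 * r ≤ 0 := mul_nonpos_of_nonneg_of_nonpos l.2 hr
    exact_mod_cast h
  · have h := le_iSup (fun l : {l : ℝ // 0 ≤ l} => ((l.1 * r : ℝ) : EReal)) ⟨0, le_rfl⟩
    simpa using h

private lemma indicator_bound (a c r : ℝ) {p : Prop} [Decidable p] (hp : ¬ p → r ≤ 0) :
    (if ((a : EReal) + (⨆ l : {l : ℝ // 0 ≤ l}, ((l.1 * r : ℝ) : EReal)) ≥ ((c : ℝ) : EReal))
        then (1:ℝ) else 0)
      ≤ (if p then (1:ℝ) else 0) + (if c ≤ a then (1:ℝ) else 0) := by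
  by_cases h1 : ((a : EReal) + (⨆ l : {l : ℝ // 0 ≤ l}, ((l.1 * r : ℝ) : EReal))
      ≥ ((c : ℝ) : EReal))
  · by_cases h2 : p
    · simp only [if_pos h1, if_pos h2]
      have h0 : (0:ℝ) ≤ if c ≤ a then (1:ℝ) else 0 := by split_ifs <;> norm_num
      linarith
    · have h3 : c ≤ a := by
        have h1' := h1
        rw [sup_lambda_nonpos r (hp h2), add_zero] at h1'
        exact_mod_cast h1'
      rw [if_pos h1, if_neg h2, if_pos h3]
      norm_num
  · simp only [if_neg h1]
    have h4 : (0:ℝ) ≤ if p then (1:ℝ) else 0 := by split_ifs <;> norm_num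
    have h5 : (0:ℝ) ≤ if c ≤ a then (1:ℝ) else 0 := by split_ifs <;> norm_num
    linarith

private lemma neg_one_le_ciSup {ι : Sort*} [Nonempty ι] (f : ι → ℝ) (h : ∀ i, -1 ≤ f i) :
    -1 ≤ ⨆ i, f i := by
  by_cases hb : BddAbove (Set.range f)
  · exact le_trans (h (Classical.arbitrary ι)) (le_ciSup hb _)
  · rw [Real.iSup_of_not_bddAbove hb]; norm_num

/-- **Converse bound for one-shot noisy lossy compression** (Theorem 1 / Theorem `thm:Cnoisy`).
A source `S ~ PS` on a finite alphabet `𝓜` is observed through the channel `W = P_{X|S}` as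
`X` on the finite alphabet `𝓧`; the reproduction alphabet is `𝓩` with distortion `dst`.
An `(M, d, ε)` code consists of a random encoder `enc : 𝓧 → {1,…,M}` and a random decoder
`dec : {1,…,M} → 𝓩` such that `P[dst(S,Z) > d] ≤ ε` (hypothesis `hcode`).
Then `ε ≥ inf_{P_{Z|X}} sup_{γ ≥ 0, P_{X̄|Z̄}} { P[ ı_{X̄|Z̄‖X}(X;Z) + sup_{λ≥0} λ(dst(S,Z) − d)
≥ log M + γ ] − exp(−γ) }`, where the probability is under the joint law `PS ⊗ W ⊗ Q` and
`ı_{X̄|Z̄‖X}(x;z) = log (P_{X̄|Z̄=z}(x) / P_X(x))`.  The inner supremum over `λ ≥ 0` is taken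
in the extended reals. -/
theorem converse_noisy_lossy_compression
    {𝓜 𝓧 𝓩 : Type*} [Fintype 𝓜] [Fintype 𝓧] [Fintype 𝓩]
    [Nonempty 𝓜] [Nonempty 𝓧] [Nonempty 𝓩]
    (PS : 𝓜 → ℝ) (hPS : IsPMF PS)
    (W : 𝓜 → 𝓧 → ℝ) (hW : IsKernel W)
    (dst : 𝓜 → 𝓩 → ℝ) (hdst : ∀ s z, 0 ≤ dst s z)
    (M : ℕ) (hM : 0 < M) (d ε : ℝ)
    (enc : 𝓧 → Fin M → ℝ) (henc : IsKernel enc)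
    (dec : Fin M → 𝓩 → ℝ) (hdec : IsKernel dec)
    (hcode : ∑ s, ∑ x, ∑ u, ∑ z,
        PS s * W s x * enc x u * dec u z * (if d < dst s z then 1 else 0) ≤ ε) :
    ε ≥ ⨅ Q : {Q : 𝓧 → 𝓩 → ℝ // IsKernel Q},
        ⨆ γ : {g : ℝ // 0 ≤ g}, ⨆ K : {K : 𝓩 → 𝓧 → ℝ // IsKernel K},
          ((∑ s, ∑ x, ∑ z, PS s * W s x * Q.1 x z *
              (if ((Real.log (K.1 z x / (∑ s', PS s' * W s' x)) : EReal)
                    + (⨆ l : {l : ℝ // 0 ≤ l}, ((l.1 * (dst s z - d) : ℝ) : EReal))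
                  ≥ ((Real.log M + γ.1 : ℝ) : EReal))
                then (1 : ℝ) else 0))
            - Real.exp (-γ.1)) := by
  classical
  have hPSnn : ∀ s, 0 ≤ PS s := hPS.1
  have hWnn : ∀ s x, 0 ≤ W s x := fun s x => (hW s).1 x
  have hencnn : ∀ x u, 0 ≤ enc x u := fun x u => (henc x).1 u
  have hdecnn : ∀ u z, 0 ≤ dec u z := fun u z => (hdec u).1 z
  have hencle : ∀ x u, enc x u ≤ 1 := by
    intro x u
    calc enc x u ≤ ∑ u', enc x u' :=
          Finset.single_le_sum (fun u' _ => hencnn x u') (Finset.mem_univ u)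
      _ = 1 := (henc x).2
  have hMpos : (0:ℝ) < (M:ℝ) := by exact_mod_cast hM
  -- the code-induced kernel
  have hQker : IsKernel (fun x z => ∑ u, enc x u * dec u z) := by
    intro x
    constructor
    · exact fun z => Finset.sum_nonneg fun u _ => mul_nonneg (hencnn x u) (hdecnn u z)
    · rw [Finset.sum_comm]
      have h1 : ∀ u, ∑ z, enc x u * dec u z = enc x u := by
        intro u; rw [← Finset.mul_sum, (hdec u).2, mul_one]
      simp only [h1]
      exact (henc x).2
  have hQnn : ∀ x z, 0 ≤ ∑ u, enc x u * dec u z := fun x z => (hQker x).1 z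
  have hε0 : 0 ≤ ε := by
    refine le_trans ?_ hcode
    refine Finset.sum_nonneg fun s _ => Finset.sum_nonneg fun x _ =>
      Finset.sum_nonneg fun u _ => Finset.sum_nonneg fun z _ => ?_
    have h0 : (0:ℝ) ≤ (if d < dst s z then (1:ℝ) else 0) := by split_ifs <;> norm_num
    exact mul_nonneg (mul_nonneg (mul_nonneg (mul_nonneg (hPSnn s) (hWnn s x))
      (hencnn x u)) (hdecnn u z)) h0
  haveI : Nonempty {g : ℝ // 0 ≤ g} := ⟨⟨0, le_rfl⟩⟩
  haveI : Nonempty {K : 𝓩 → 𝓧 → ℝ // IsKernel K} := by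
    refine ⟨⟨fun _ x => (Fintype.card 𝓧 : ℝ)⁻¹, fun z => ⟨fun x => by positivity, ?_⟩⟩⟩
    rw [Finset.sum_const, nsmul_eq_mul, Finset.card_univ, mul_inv_cancel₀]
    exact Nat.cast_ne_zero.2 Fintype.card_ne_zero
  -- key estimate for the code-induced kernel
  have key : ∀ (γ : {g : ℝ // 0 ≤ g}) (K : {K : 𝓩 → 𝓧 → ℝ // IsKernel K}),
      ((∑ s, ∑ x, ∑ z, PS s * W s x * (∑ u, enc x u * dec u z) *
          (if ((Real.log (K.1 z x / (∑ s', PS s' * W s' x)) : EReal)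
                + (⨆ l : {l : ℝ // 0 ≤ l}, ((l.1 * (dst s z - d) : ℝ) : EReal))
              ≥ ((Real.log M + γ.1 : ℝ) : EReal))
            then (1 : ℝ) else 0))
        - Real.exp (-γ.1)) ≤ ε := by
    intro γ K
    set c : ℝ := Real.log M + γ.1 with hc
    have hKnn : ∀ z x, 0 ≤ K.1 z x := fun z x => (K.2 z).1 x
    -- split the indicator
    have hsplit : (∑ s, ∑ x, ∑ z, PS s * W s x * (∑ u, enc x u * dec u z) *
          (if ((Real.log (K.1 z x / (∑ s', PS s' * W s' x)) : EReal)
                + (⨆ l : {l : ℝ // 0 ≤ l}, ((l.1 * (dst s z - d) : ℝ) : EReal))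
              ≥ ((c : ℝ) : EReal))
            then (1 : ℝ) else 0))
        ≤ (∑ s, ∑ x, ∑ z, PS s * W s x * (∑ u, enc x u * dec u z) *
            (if d < dst s z then (1:ℝ) else 0))
          + (∑ s, ∑ x, ∑ z, PS s * W s x * (∑ u, enc x u * dec u z) *
            (if c ≤ Real.log (K.1 z x / (∑ s', PS s' * W s' x)) then (1:ℝ) else 0)) := by
      have hpt : ∀ s x z, PS s * W s x * (∑ u, enc x u * dec u z) *
          (if ((Real.log (K.1 z x / (∑ s', PS s' * W s' x)) : EReal)
                + (⨆ l : {l : ℝ // 0 ≤ l}, ((l.1 * (dst s z - d) : ℝ) : EReal))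
              ≥ ((c : ℝ) : EReal))
            then (1 : ℝ) else 0)
          ≤ PS s * W s x * (∑ u, enc x u * dec u z) * (if d < dst s z then (1:ℝ) else 0)
            + PS s * W s x * (∑ u, enc x u * dec u z) *
              (if c ≤ Real.log (K.1 z x / (∑ s', PS s' * W s' x)) then (1:ℝ) else 0) := by
        intro s x z
        have hib := indicator_bound (Real.log (K.1 z x / (∑ s', PS s' * W s' x))) c
          (dst s z - d) (p := d < dst s z) (fun hnp => by
            have := not_lt.mp hnp; linarith)
        have hw : 0 ≤ PS s * W s x * (∑ u, enc x u * dec u z) :=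
          mul_nonneg (mul_nonneg (hPSnn s) (hWnn s x)) (hQnn x z)
        calc PS s * W s x * (∑ u, enc x u * dec u z) * _
            ≤ PS s * W s x * (∑ u, enc x u * dec u z) *
              ((if d < dst s z then (1:ℝ) else 0)
                + (if c ≤ Real.log (K.1 z x / (∑ s', PS s' * W s' x)) then (1:ℝ) else 0)) :=
              mul_le_mul_of_nonneg_left hib hw
          _ = _ := by ring
      calc (∑ s, ∑ x, ∑ z, PS s * W s x * (∑ u, enc x u * dec u z) *
            (if ((Real.log (K.1 z x / (∑ s', PS s' * W s' x)) : EReal)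
                  + (⨆ l : {l : ℝ // 0 ≤ l}, ((l.1 * (dst s z - d) : ℝ) : EReal))
                ≥ ((c : ℝ) : EReal))
              then (1 : ℝ) else 0))
          ≤ ∑ s, ∑ x, ∑ z, (PS s * W s x * (∑ u, enc x u * dec u z) *
              (if d < dst s z then (1:ℝ) else 0)
            + PS s * W s x * (∑ u, enc x u * dec u z) *
              (if c ≤ Real.log (K.1 z x / (∑ s', PS s' * W s' x)) then (1:ℝ) else 0)) :=
            Finset.sum_le_sum fun s _ => Finset.sum_le_sum fun x _ =>
              Finset.sum_le_sum fun z _ => hpt s x z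
        _ = _ := by simp only [Finset.sum_add_distrib]
    -- first sum ≤ ε via hcode
    have hS1 : (∑ s, ∑ x, ∑ z, PS s * W s x * (∑ u, enc x u * dec u z) *
          (if d < dst s z then (1:ℝ) else 0)) ≤ ε := by
      refine le_trans (le_of_eq ?_) hcode
      refine Finset.sum_congr rfl fun s _ => Finset.sum_congr rfl fun x _ => ?_
      rw [← Finset.sum_comm]
      refine Finset.sum_congr rfl fun z _ => ?_
      rw [Finset.mul_sum, Finset.sum_mul]
      exact Finset.sum_congr rfl fun u _ => by ring
    -- second sum ≤ exp(-γ)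
    have hS2 : (∑ s, ∑ x, ∑ z, PS s * W s x * (∑ u, enc x u * dec u z) *
          (if c ≤ Real.log (K.1 z x / (∑ s', PS s' * W s' x)) then (1:ℝ) else 0))
        ≤ Real.exp (-γ.1) := by
      by_cases hcpos : 0 < c
      · -- pointwise bound
        have hpoint : ∀ x z, (∑ s', PS s' * W s' x) *
            (if c ≤ Real.log (K.1 z x / (∑ s', PS s' * W s' x)) then (1:ℝ) else 0)
            ≤ K.1 z x * (Real.exp (-γ.1) / M) := by
          intro x z
          have hrhs : 0 ≤ K.1 z x * (Real.exp (-γ.1) / M) :=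
            mul_nonneg (hKnn z x) (div_nonneg (Real.exp_pos _).le hMpos.le)
          split_ifs with h
          · rcases eq_or_lt_of_le (Finset.sum_nonneg fun s' _ =>
                mul_nonneg (hPSnn s') (hWnn s' x)) with hx0 | hx0
            · rw [← hx0, zero_mul]; exact hrhs
            · rcases eq_or_lt_of_le (div_nonneg (hKnn z x) hx0.le) with hr0 | hr0
              · exfalso; rw [← hr0, Real.log_zero] at h; linarith
              · have hexp : Real.exp c ≤ K.1 z x / (∑ s', PS s' * W s' x) :=
                  (Real.le_log_iff_exp_le hr0).mp h
                have hMexp : Real.exp c = (M:ℝ) * Real.exp γ.1 := by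
                  rw [hc, Real.exp_add, Real.exp_log hMpos]
                have h1 : (M:ℝ) * Real.exp γ.1 * (∑ s', PS s' * W s' x) ≤ K.1 z x := by
                  have := (le_div_iff₀ hx0).mp hexp
                  rw [hMexp] at this; exact this
                have hee : Real.exp γ.1 * Real.exp (-γ.1) = 1 := by
                  rw [← Real.exp_add]; simp
                rw [mul_one, ← mul_div_assoc, le_div_iff₀ hMpos]
                have h2 := mul_le_mul_of_nonneg_right h1 (Real.exp_pos (-γ.1)).le
                have h3 : (M:ℝ) * Real.exp γ.1 * (∑ s', PS s' * W s' x) * Real.exp (-γ.1)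
                    = (∑ s', PS s' * W s' x) * M * (Real.exp γ.1 * Real.exp (-γ.1)) := by
                  ring
                rw [h3, hee, mul_one] at h2
                exact h2
          · rw [mul_zero]; exact hrhs
        calc (∑ s, ∑ x, ∑ z, PS s * W s x * (∑ u, enc x u * dec u z) *
              (if c ≤ Real.log (K.1 z x / (∑ s', PS s' * W s' x)) then (1:ℝ) else 0))
            = ∑ x, ∑ z, (∑ s', PS s' * W s' x) * (∑ u, enc x u * dec u z) *
              (if c ≤ Real.log (K.1 z x / (∑ s', PS s' * W s' x)) then (1:ℝ) else 0) := by
              rw [Finset.sum_comm]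
              refine Finset.sum_congr rfl fun x _ => ?_
              rw [Finset.sum_comm]
              refine Finset.sum_congr rfl fun z _ => ?_
              rw [← Finset.sum_mul, ← Finset.sum_mul]
          _ ≤ ∑ x, ∑ z, (∑ u, enc x u * dec u z) * (K.1 z x * (Real.exp (-γ.1) / M)) := by
              refine Finset.sum_le_sum fun x _ => Finset.sum_le_sum fun z _ => ?_
              calc (∑ s', PS s' * W s' x) * (∑ u, enc x u * dec u z) *
                  (if c ≤ Real.log (K.1 z x / (∑ s', PS s' * W s' x)) then (1:ℝ) else 0)
                  = (∑ u, enc x u * dec u z) * ((∑ s', PS s' * W s' x) *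
                    (if c ≤ Real.log (K.1 z x / (∑ s', PS s' * W s' x)) then (1:ℝ) else 0)) := by
                    ring
                _ ≤ (∑ u, enc x u * dec u z) * (K.1 z x * (Real.exp (-γ.1) / M)) :=
                    mul_le_mul_of_nonneg_left (hpoint x z) (hQnn x z)
          _ ≤ ∑ x, ∑ z, ∑ u, dec u z * (K.1 z x * (Real.exp (-γ.1) / M)) := by
              refine Finset.sum_le_sum fun x _ => Finset.sum_le_sum fun z _ => ?_
              rw [Finset.sum_mul]
              refine Finset.sum_le_sum fun u _ => ?_
              have hnn : 0 ≤ dec u z * (K.1 z x * (Real.exp (-γ.1) / M)) :=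
                mul_nonneg (hdecnn u z) (mul_nonneg (hKnn z x)
                  (div_nonneg (Real.exp_pos _).le hMpos.le))
              calc enc x u * dec u z * (K.1 z x * (Real.exp (-γ.1) / M))
                  = enc x u * (dec u z * (K.1 z x * (Real.exp (-γ.1) / M))) := by ring
                _ ≤ 1 * (dec u z * (K.1 z x * (Real.exp (-γ.1) / M))) :=
                    mul_le_mul_of_nonneg_right (hencle x u) hnn
                _ = dec u z * (K.1 z x * (Real.exp (-γ.1) / M)) := one_mul _
          _ = Real.exp (-γ.1) := by
              rw [Finset.sum_comm]
              have hz : ∀ z, ∑ x, ∑ u, dec u z * (K.1 z x * (Real.exp (-γ.1) / M))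
                  = ∑ u, dec u z * (Real.exp (-γ.1) / M) := by
                intro z
                rw [Finset.sum_comm]
                refine Finset.sum_congr rfl fun u _ => ?_
                rw [← Finset.mul_sum, ← Finset.sum_mul, (K.2 z).2, one_mul]
              simp only [hz]
              rw [Finset.sum_comm]
              have hu : ∀ u, ∑ z, dec u z * (Real.exp (-γ.1) / M) = Real.exp (-γ.1) / M := by
                intro u
                rw [← Finset.sum_mul, (hdec u).2, one_mul]
              simp only [hu]
              rw [Finset.sum_const, nsmul_eq_mul, Finset.card_univ, Fintype.card_fin]
              field_simp
      · -- degenerate case: c ≤ 0 forces γ = 0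
        have hlogM : 0 ≤ Real.log M := Real.log_nonneg (by exact_mod_cast hM)
        have hγ0 : γ.1 = 0 := by
          have h1 := not_lt.mp hcpos
          have h2 := γ.2
          rw [hc] at h1
          linarith
        have htot : (∑ s, ∑ x, ∑ z, PS s * W s x * (∑ u, enc x u * dec u z)) = 1 := by
          have h1 : ∀ s x, ∑ z, PS s * W s x * (∑ u, enc x u * dec u z) = PS s * W s x := by
            intro s x; rw [← Finset.mul_sum, (hQker x).2, mul_one]
          simp only [h1]
          have h2 : ∀ s, ∑ x, PS s * W s x = PS s := by
            intro s; rw [← Finset.mul_sum, (hW s).2, mul_one]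
          simp only [h2]
          exact hPS.2
        have hb : (∑ s, ∑ x, ∑ z, PS s * W s x * (∑ u, enc x u * dec u z) *
              (if c ≤ Real.log (K.1 z x / (∑ s', PS s' * W s' x)) then (1:ℝ) else 0))
            ≤ ∑ s, ∑ x, ∑ z, PS s * W s x * (∑ u, enc x u * dec u z) := by
          refine Finset.sum_le_sum fun s _ => Finset.sum_le_sum fun x _ =>
            Finset.sum_le_sum fun z _ => ?_
          have hw : 0 ≤ PS s * W s x * (∑ u, enc x u * dec u z) :=
            mul_nonneg (mul_nonneg (hPSnn s) (hWnn s x)) (hQnn x z)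
          have hle1 : (if c ≤ Real.log (K.1 z x / (∑ s', PS s' * W s' x)) then (1:ℝ) else 0) ≤ 1 := by
            split_ifs <;> norm_num
          calc PS s * W s x * (∑ u, enc x u * dec u z) *
              (if c ≤ Real.log (K.1 z x / (∑ s', PS s' * W s' x)) then (1:ℝ) else 0)
              ≤ PS s * W s x * (∑ u, enc x u * dec u z) * 1 :=
                mul_le_mul_of_nonneg_left hle1 hw
            _ = PS s * W s x * (∑ u, enc x u * dec u z) := mul_one _
        rw [hγ0]
        rw [htot] at hb
        simpa using hb
    linarith
  -- put things together
  rw [ge_iff_le]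
  refine le_trans (ciInf_le ?_ ⟨fun x z => ∑ u, enc x u * dec u z, hQker⟩) ?_
  · refine ⟨-1, ?_⟩
    rintro v ⟨Qp, rfl⟩
    refine neg_one_le_ciSup _ fun γ => neg_one_le_ciSup _ fun K => ?_
    have hsnn : 0 ≤ ∑ s, ∑ x, ∑ z, PS s * W s x * Qp.1 x z *
        (if ((Real.log (K.1 z x / (∑ s', PS s' * W s' x)) : EReal)
              + (⨆ l : {l : ℝ // 0 ≤ l}, ((l.1 * (dst s z - d) : ℝ) : EReal))
            ≥ ((Real.log M + γ.1 : ℝ) : EReal))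
          then (1 : ℝ) else 0) := by
      refine Finset.sum_nonneg fun s _ => Finset.sum_nonneg fun x _ =>
        Finset.sum_nonneg fun z _ => ?_
      have h0 : (0:ℝ) ≤ (if ((Real.log (K.1 z x / (∑ s', PS s' * W s' x)) : EReal)
              + (⨆ l : {l : ℝ // 0 ≤ l}, ((l.1 * (dst s z - d) : ℝ) : EReal))
            ≥ ((Real.log M + γ.1 : ℝ) : EReal))
          then (1 : ℝ) else 0) := by split_ifs <;> norm_num
      exact mul_nonneg (mul_nonneg (mul_nonneg (hPSnn s) (hWnn s x)) ((Qp.2 x).1 z)) h0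
    have hexp1 : Real.exp (-γ.1) ≤ 1 := Real.exp_le_one_iff.mpr (by linarith [γ.2])
    linarith
  · refine ciSup_le fun γ => ciSup_le fun K => ?_
    exact key γ K
end
end

section
/- Decomposition of the noisy rate-dispersion function: Ṽ(d) = V(d) + (λ*)²·Var[ d̄_{Z*}(S|X) − E[ d̄_{Z*}(S|X) | X ] ], where V(d) = Var[ ȷ_X(X, d) ] is the rate-dispersion function of the surrogate noiseless problem; this holds because the covariance Cov( ȷ_X(X, d), d̄_{Z*}(S|X) − E[ d̄_{Z*}(S|X) | X ] ) = 0. In particular Ṽ(d) ≥ V(d), with equality iff d̄_{Z*}(S|X) = E[ d̄_{Z*}(S|X) | X ] almost surely. -/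
open scoped BigOperators

noncomputable section

variable {𝓢 𝓐 𝓩 : Type*} [Fintype 𝓢] [Fintype 𝓐] [Fintype 𝓩]

def margX (PS : 𝓢 → ℝ) (W : 𝓢 → 𝓐 → ℝ) (x : 𝓐) : ℝ := ∑ s, PS s * W s x

def margZ (PX : 𝓐 → ℝ) (Q : 𝓐 → 𝓩 → ℝ) (z : 𝓩) : ℝ := ∑ x, PX x * Q x z

def mutInfo (PX : 𝓐 → ℝ) (Q : 𝓐 → 𝓩 → ℝ) : ℝ :=
  ∑ x, ∑ z, PX x * Q x z * Real.log (Q x z / margZ PX Q z)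

def avgDist (PS : 𝓢 → ℝ) (W : 𝓢 → 𝓐 → ℝ) (dst : 𝓢 → 𝓩 → ℝ) (Q : 𝓐 → 𝓩 → ℝ) : ℝ :=
  ∑ s, ∑ x, ∑ z, PS s * W s x * Q x z * dst s z

def RDfun (PS : 𝓢 → ℝ) (W : 𝓢 → 𝓐 → ℝ) (dst : 𝓢 → 𝓩 → ℝ) (d : ℝ) : ℝ :=
  sInf { r | ∃ Q : 𝓐 → 𝓩 → ℝ,
      IsKernel Q ∧ avgDist PS W dst Q ≤ d ∧ mutInfo (margX PS W) Q = r }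

/-- Expectation of `f(S,X)` under the joint law `PS ⊗ W`. -/
def jointE (PS : 𝓢 → ℝ) (W : 𝓢 → 𝓐 → ℝ) (f : 𝓢 → 𝓐 → ℝ) : ℝ :=
  ∑ s, ∑ x, PS s * W s x * f s x

/-- Variance of `f(S,X)` under the joint law `PS ⊗ W`. -/
def jointVar (PS : 𝓢 → ℝ) (W : 𝓢 → 𝓐 → ℝ) (f : 𝓢 → 𝓐 → ℝ) : ℝ :=
  jointE PS W (fun s x => (f s x - jointE PS W f) ^ 2)

/-- Covariance of `f(S,X)` and `g(S,X)` under the joint law `PS ⊗ W`. -/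
def jointCov (PS : 𝓢 → ℝ) (W : 𝓢 → 𝓐 → ℝ) (f g : 𝓢 → 𝓐 → ℝ) : ℝ :=
  jointE PS W (fun s x => (f s x - jointE PS W f) * (g s x - jointE PS W g))

section Aux
variable {𝓢 𝓐 : Type*} [Fintype 𝓢] [Fintype 𝓐]

lemma jointE_congr (PS : 𝓢 → ℝ) (W : 𝓢 → 𝓐 → ℝ) (f g : 𝓢 → 𝓐 → ℝ)
    (h : ∀ s x, f s x = g s x) : jointE PS W f = jointE PS W g := by
  simp only [jointE, h]

lemma jointE_add (PS : 𝓢 → ℝ) (W : 𝓢 → 𝓐 → ℝ) (f g : 𝓢 → 𝓐 → ℝ) :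
    jointE PS W (fun s x => f s x + g s x) = jointE PS W f + jointE PS W g := by
  simp only [jointE, mul_add, Finset.sum_add_distrib]

lemma jointE_smul (PS : 𝓢 → ℝ) (W : 𝓢 → 𝓐 → ℝ) (c : ℝ) (f : 𝓢 → 𝓐 → ℝ) :
    jointE PS W (fun s x => c * f s x) = c * jointE PS W f := by
  simp only [jointE, Finset.mul_sum]
  exact Finset.sum_congr rfl fun s _ => Finset.sum_congr rfl fun x _ => by ring

lemma jointE_nonneg (PS : 𝓢 → ℝ) (W : 𝓢 → 𝓐 → ℝ) (f : 𝓢 → 𝓐 → ℝ)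
    (hPS : ∀ s, 0 ≤ PS s) (hW : ∀ s x, 0 ≤ W s x) (hf : ∀ s x, 0 ≤ f s x) :
    0 ≤ jointE PS W f := by
  refine Finset.sum_nonneg fun s _ => Finset.sum_nonneg fun x _ => ?_
  exact mul_nonneg (mul_nonneg (hPS s) (hW s x)) (hf s x)

end Aux

/-- **Decomposition of the noisy rate-dispersion function** (Eq. (5) and the Remark
after Theorem 5): `Ṽ(d) = V(d) + (λ*)² Var[d̄_{Z*}(S|X) − E[d̄_{Z*}(S|X) | X]]`, the
covariance between `ȷ_X(X,d)` and `d̄_{Z*}(S|X) − E[d̄_{Z*}(S|X)|X]` vanishes, hence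
`Ṽ(d) ≥ V(d)` with equality iff `d̄_{Z*}(S|X) = E[d̄_{Z*}(S|X)|X]` almost surely.
Here `V(d) = Var[ȷ_X(X,d)]` is the rate-dispersion function of the surrogate noiseless
problem, `ȷ_X(x,d) = D(P_{Z*|X=x}‖P_{Z*}) + λ* E[d̄(x,Z*)|X=x] − λ* d`,
`ȷ̃_{S,X}(s,x,d) = ȷ_X(x,d) + λ* (d̄_{Z*}(s|x) − E[d̄_{Z*}(S|x)|X=x])`, and
`d̄_{Z*}(s|x) = E[dst(s,Z*)|X=x]`. -/
theorem noisy_rate_dispersion_decomposition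
    [Nonempty 𝓢] [Nonempty 𝓐] [Nonempty 𝓩]
    (PS : 𝓢 → ℝ) (hPS : IsPMF PS)
    (W : 𝓢 → 𝓐 → ℝ) (hW : IsKernel W)
    (dst : 𝓢 → 𝓩 → ℝ) (hdst : ∀ s z, 0 ≤ dst s z)
    (d : ℝ)
    -- Qst = P_{Z*|X} achieves R(d), with the distortion constraint met with equality
    (Qst : 𝓐 → 𝓩 → ℝ) (hQst : IsKernel Qst)
    (hach : mutInfo (margX PS W) Qst = RDfun PS W dst d)
    (heq : avgDist PS W dst Qst = d)
    -- λ* = −R′(d), positive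
    (lam : ℝ) (hlam : HasDerivAt (RDfun PS W dst) (-lam) d) (hlampos : 0 < lam)
    -- d̄_{Z*}(s|x) = E[dst(s, Z*) | X = x]
    (dbarZ : 𝓢 → 𝓐 → ℝ) (hdbarZ : ∀ s x, dbarZ s x = ∑ z, Qst x z * dst s z)
    -- E[d̄_{Z*}(S|X) | X = x]
    (condM : 𝓐 → ℝ)
    (hcondM : ∀ x, condM x = ∑ s, (PS s * W s x / margX PS W x) * dbarZ s x)
    -- surrogate d̄-tilted information ȷ_X(x, d)
    (jX : 𝓐 → ℝ)
    (hjX : ∀ x, jX x =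
      (∑ z, Qst x z * Real.log (Qst x z / margZ (margX PS W) Qst z))
        + lam * condM x - lam * d)
    -- noisy d-tilted information ȷ̃_{S,X}(s, x, d)
    (jt : 𝓢 → 𝓐 → ℝ)
    (hjt : ∀ s x, jt s x = jX x + lam * (dbarZ s x - condM x)) :
    -- Ṽ(d) = V(d) + (λ*)² Var[d̄_{Z*}(S|X) − E[d̄_{Z*}(S|X)|X]]
    jointVar PS W jt
        = jointVar PS W (fun _ x => jX x)
          + lam ^ 2 * jointVar PS W (fun s x => dbarZ s x - condM x) ∧
    -- the covariance term vanishes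
    jointCov PS W (fun _ x => jX x) (fun s x => dbarZ s x - condM x) = 0 ∧
    -- Ṽ(d) ≥ V(d)
    jointVar PS W (fun _ x => jX x) ≤ jointVar PS W jt ∧
    -- with equality iff d̄_{Z*}(S|X) = E[d̄_{Z*}(S|X)|X] almost surely
    (jointVar PS W jt = jointVar PS W (fun _ x => jX x) ↔
      ∀ s x, PS s * W s x ≠ 0 → dbarZ s x = condM x) := by
    -- abbreviations
  have hPSpos := hPS.1
  have hWpos : ∀ s x, 0 ≤ W s x := fun s x => (hW s).1 x
  -- per-x conditional centering
  have hcond0 : ∀ x, ∑ s, PS s * W s x * (dbarZ s x - condM x) = 0 := by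
    intro x
    by_cases hx : margX PS W x = 0
    · have hz : ∀ s ∈ Finset.univ, PS s * W s x = 0 := by
        have hx' : ∑ s, PS s * W s x = 0 := by rwa [margX] at hx
        exact fun s hs => (Finset.sum_eq_zero_iff_of_nonneg
          (fun s _ => mul_nonneg (hPSpos s) (hWpos s x))).mp hx' s hs
      refine Finset.sum_eq_zero fun s hs => ?_
      rw [hz s hs, zero_mul]
    · have h1 : ∑ s, PS s * W s x * dbarZ s x = margX PS W x * condM x := by
        rw [hcondM x, Finset.mul_sum]
        refine Finset.sum_congr rfl fun s _ => ?_
        field_simp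
      have h2 : ∑ s, PS s * W s x * condM x = margX PS W x * condM x := by
        rw [← Finset.sum_mul, margX]
      calc ∑ s, PS s * W s x * (dbarZ s x - condM x)
          = (∑ s, PS s * W s x * dbarZ s x) - ∑ s, PS s * W s x * condM x := by
            rw [← Finset.sum_sub_distrib]
            exact Finset.sum_congr rfl fun s _ => by ring
        _ = 0 := by rw [h1, h2, sub_self]
  -- key orthogonality: any function of x is orthogonal to the centered dbarZ
  have key : ∀ h : 𝓐 → ℝ,
      jointE PS W (fun s x => h x * (dbarZ s x - condM x)) = 0 := by
    intro h
    simp only [jointE]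
    rw [Finset.sum_comm]
    refine Finset.sum_eq_zero fun x _ => ?_
    have : ∑ s, PS s * W s x * (h x * (dbarZ s x - condM x))
        = h x * ∑ s, PS s * W s x * (dbarZ s x - condM x) := by
      rw [Finset.mul_sum]
      exact Finset.sum_congr rfl fun s _ => by ring
    rw [this, hcond0 x, mul_zero]
  have Eg : jointE PS W (fun s x => dbarZ s x - condM x) = 0 := by
    have := key fun _ => 1
    simpa using this
  set J := jointE PS W (fun _ x => jX x) with hJ
  -- mean of jt equals mean of jX
  have hEjt : jointE PS W jt = J := by
    rw [jointE_congr PS W jt _ hjt,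
      jointE_add PS W (fun _ x => jX x) (fun s x => lam * (dbarZ s x - condM x)),
      jointE_smul PS W lam (fun s x => dbarZ s x - condM x), Eg, mul_zero, add_zero]
  -- notation for the pieces
  set VX := jointE PS W (fun _ x => (jX x - J) ^ 2) with hVX
  set Vg := jointE PS W (fun s x => (dbarZ s x - condM x) ^ 2) with hVg
  have hVarX : jointVar PS W (fun _ x => jX x) = VX := rfl
  have hVarg : jointVar PS W (fun s x => dbarZ s x - condM x) = Vg := by
    rw [jointVar, Eg]
    exact jointE_congr _ _ _ _ fun s x => by ring
  have hVgnn : 0 ≤ Vg := jointE_nonneg _ _ _ hPSpos hWpos fun s x => sq_nonneg _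
  -- variance decomposition
  have hVarjt : jointVar PS W jt = VX + lam ^ 2 * Vg := by
    rw [jointVar, hEjt]
    have e1 : jointE PS W (fun s x => (jt s x - J) ^ 2)
        = jointE PS W (fun s x =>
            (jX x - J) ^ 2 + lam ^ 2 * (dbarZ s x - condM x) ^ 2
              + (2 * lam) * ((jX x - J) * (dbarZ s x - condM x))) :=
      jointE_congr _ _ _ _ fun s x => by rw [hjt s x]; ring
    rw [e1,
      jointE_add PS W
        (fun s x => (jX x - J) ^ 2 + lam ^ 2 * (dbarZ s x - condM x) ^ 2)
        (fun s x => (2 * lam) * ((jX x - J) * (dbarZ s x - condM x))),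
      jointE_add PS W (fun _ x => (jX x - J) ^ 2)
        (fun s x => lam ^ 2 * (dbarZ s x - condM x) ^ 2),
      jointE_smul PS W (lam ^ 2) (fun s x => (dbarZ s x - condM x) ^ 2),
      jointE_smul PS W (2 * lam) (fun s x => (jX x - J) * (dbarZ s x - condM x)),
      key (fun x => jX x - J), mul_zero, add_zero]
  refine ⟨by rw [hVarjt, hVarX, hVarg], ?_, ?_, ?_⟩
  · -- covariance vanishes
    rw [jointCov, Eg]
    have : jointE PS W (fun s x =>
        ((fun _ x => jX x) s x - jointE PS W fun _ x => jX x)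
          * ((fun s x => dbarZ s x - condM x) s x - 0))
        = jointE PS W (fun s x => (jX x - J) * (dbarZ s x - condM x)) :=
      jointE_congr _ _ _ _ fun s x => by simp [hJ]
    rw [this, key (fun x => jX x - J)]
  · -- Ṽ ≥ V
    rw [hVarjt, hVarX]
    nlinarith [sq_nonneg lam]
  · -- equality iff a.s. equality
    rw [hVarjt, hVarX]
    have hlam2 : (0:ℝ) < lam ^ 2 := by positivity
    constructor
    · intro hEqv s x hp
      have hVg0 : Vg = 0 := by
        have : lam ^ 2 * Vg = 0 := by linarith
        exact (mul_eq_zero.mp this).resolve_left (ne_of_gt hlam2)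
      have hVg0' : ∑ s, ∑ x, PS s * W s x * (dbarZ s x - condM x) ^ 2 = 0 := by
        rwa [hVg, jointE] at hVg0
      have hterm : ∀ s ∈ Finset.univ, ∀ x ∈ Finset.univ,
          PS s * W s x * (dbarZ s x - condM x) ^ 2 = 0 := by
        intro s hs x hx
        have h1 := (Finset.sum_eq_zero_iff_of_nonneg
          (fun s _ => Finset.sum_nonneg fun x _ =>
            mul_nonneg (mul_nonneg (hPSpos s) (hWpos s x)) (sq_nonneg _))).mp hVg0' s hs
        exact (Finset.sum_eq_zero_iff_of_nonneg
          (fun x _ => mul_nonneg (mul_nonneg (hPSpos s) (hWpos s x)) (sq_nonneg _))).mp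
          h1 x hx
      have := hterm s (Finset.mem_univ s) x (Finset.mem_univ x)
      have hsq : (dbarZ s x - condM x) ^ 2 = 0 :=
        (mul_eq_zero.mp this).resolve_left hp
      have := pow_eq_zero_iff (n := 2) (by norm_num) |>.mp hsq
      linarith [this]
    · intro has
      have hVg0 : Vg = 0 := by
        rw [hVg, jointE]
        refine Finset.sum_eq_zero fun s _ => Finset.sum_eq_zero fun x _ => ?_
        by_cases hp : PS s * W s x = 0
        · rw [hp, zero_mul]
        · rw [has s x hp, sub_self]
          ring
      rw [hVg0, mul_zero, add_zero]
end
end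

section
/- Relations between noisy and surrogate d-tilted information: almost surely, ȷ̃_{S,X}(S, X, d) = ȷ_X(X, d) + λ*·d̄_{Z*}(S|X) − λ*·E[ d̄_{Z*}(S|X) | X ]; consequently E[ ȷ̃_{S,X}(S, X, d) ] = R_{S,X}(d) = E[ ȷ_X(X, d) ]. -/
open scoped BigOperators

noncomputable section

variable {𝓢 𝓐 𝓩 : Type*} [Fintype 𝓢] [Fintype 𝓐] [Fintype 𝓩]

/-- **Relations between the noisy and the surrogate d-tilted information**
(Eqs. (16)–(18)): almost surely
`ȷ̃_{S,X}(S,X,d) = ȷ_X(X,d) + λ*(d̄_{Z*}(S|X) − E[d̄_{Z*}(S|X)|X])`, and consequently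
`E[ȷ̃_{S,X}(S,X,d)] = R_{S,X}(d) = E[ȷ_X(X,d)]`. -/
theorem noisy_tilted_information_relations
    [Nonempty 𝓢] [Nonempty 𝓐] [Nonempty 𝓩]
    (PS : 𝓢 → ℝ) (hPS : IsPMF PS)
    (W : 𝓢 → 𝓐 → ℝ) (hW : IsKernel W)
    (dst : 𝓢 → 𝓩 → ℝ) (hdst : ∀ s z, 0 ≤ dst s z)
    (d : ℝ)
    -- Qst = P_{Z*|X} achieves R(d), with the distortion constraint met with equality
    (Qst : 𝓐 → 𝓩 → ℝ) (hQst : IsKernel Qst)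
    (hach : mutInfo (margX PS W) Qst = RDfun PS W dst d)
    (heq : avgDist PS W dst Qst = d)
    -- λ* = −R′_{S,X}(d)
    (lam : ℝ) (hlam : HasDerivAt (RDfun PS W dst) (-lam) d)
    -- d̄_{Z*}(s|x) = E[dst(s, Z*) | X = x]
    (dbarZ : 𝓢 → 𝓐 → ℝ) (hdbarZ : ∀ s x, dbarZ s x = ∑ z, Qst x z * dst s z)
    -- E[d̄_{Z*}(S|X) | X = x]
    (condM : 𝓐 → ℝ)
    (hcondM : ∀ x, condM x = ∑ s, (PS s * W s x / margX PS W x) * dbarZ s x)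
    -- surrogate d̄-tilted information:
    -- ȷ_X(x,d) = D(P_{Z*|X=x} ‖ P_{Z*}) + λ* E[d̄(x,Z*)|X=x] − λ* d
    (jX : 𝓐 → ℝ)
    (hjX : ∀ x, jX x =
      (∑ z, Qst x z * Real.log (Qst x z / margZ (margX PS W) Qst z))
        + lam * condM x - lam * d)
    -- noisy d-tilted information:
    -- ȷ̃_{S,X}(s,x,d) = D(P_{Z*|X=x} ‖ P_{Z*}) + λ* d̄_{Z*}(s|x) − λ* d
    (jt : 𝓢 → 𝓐 → ℝ)
    (hjt : ∀ s x, jt s x =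
      (∑ z, Qst x z * Real.log (Qst x z / margZ (margX PS W) Qst z))
        + lam * dbarZ s x - lam * d) :
    -- almost surely, ȷ̃ = ȷ_X + λ*(d̄_{Z*}(S|X) − E[d̄_{Z*}(S|X)|X])
    (∀ s x, PS s * W s x ≠ 0 →
        jt s x = jX x + lam * (dbarZ s x - condM x)) ∧
    -- E[ȷ̃(S,X,d)] = R_{S,X}(d)
    (∑ s, ∑ x, PS s * W s x * jt s x) = RDfun PS W dst d ∧
    -- E[ȷ_X(X,d)] = R_{S,X}(d)
    (∑ x, margX PS W x * jX x) = RDfun PS W dst d := by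
  -- key: margX x * condM x = ∑ s, PS s * W s x * dbarZ s x
  have hkey : ∀ x, margX PS W x * condM x = ∑ s, PS s * W s x * dbarZ s x := by
    intro x
    by_cases h : margX PS W x = 0
    · have hzero : ∀ s, PS s * W s x = 0 := by
        have := (Finset.sum_eq_zero_iff_of_nonneg (fun s _ =>
          mul_nonneg (hPS.1 s) ((hW s).1 x))).mp h
        exact fun s => this s (Finset.mem_univ s)
      rw [h, zero_mul]
      refine (Finset.sum_eq_zero fun s _ => ?_).symm
      rw [hzero s, zero_mul]
    · rw [hcondM x, Finset.mul_sum]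
      refine Finset.sum_congr rfl fun s _ => ?_
      field_simp
      try ring
  have hEd : (∑ s, ∑ x, PS s * W s x * dbarZ s x) = d := by
    rw [← heq]
    unfold avgDist
    refine Finset.sum_congr rfl fun s _ => Finset.sum_congr rfl fun x _ => ?_
    rw [hdbarZ, Finset.mul_sum]
    exact Finset.sum_congr rfl fun z _ => by ring
  have hEd' : (∑ x, margX PS W x * condM x) = d := by
    rw [← hEd, Finset.sum_comm]
    exact Finset.sum_congr rfl fun x _ => hkey x
  set D : 𝓐 → ℝ := fun x =>
    ∑ z, Qst x z * Real.log (Qst x z / margZ (margX PS W) Qst z) with hD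
  have hMI : (∑ x, margX PS W x * D x) = mutInfo (margX PS W) Qst := by
    unfold mutInfo
    refine Finset.sum_congr rfl fun x _ => ?_
    rw [hD, Finset.mul_sum]
    exact Finset.sum_congr rfl fun z _ => by ring
  have hMI2 : (∑ s, ∑ x, PS s * W s x * D x) = mutInfo (margX PS W) Qst := by
    rw [← hMI, Finset.sum_comm]
    refine Finset.sum_congr rfl fun x _ => ?_
    rw [margX, Finset.sum_mul]
  have hsum1 : (∑ s, PS s * ∑ x, W s x) = 1 := by
    rw [← hPS.2]
    refine Finset.sum_congr rfl fun s _ => ?_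
    rw [(hW s).2, mul_one]
  have hsum1c : (∑ s, ∑ x, PS s * W s x) = 1 := by
    rw [← hsum1]
    exact Finset.sum_congr rfl fun s _ => (Finset.mul_sum _ _ _).symm
  have hsum1' : (∑ x, margX PS W x) = 1 := by
    unfold margX
    rw [Finset.sum_comm]
    exact hsum1c
  refine ⟨fun s x _ => by rw [hjt, hjX]; ring, ?_, ?_⟩
  · have step : (∑ s, ∑ x, PS s * W s x * jt s x)
        = ∑ s, ∑ x, (PS s * W s x * D x + lam * (PS s * W s x * dbarZ s x)
            - lam * d * (PS s * W s x)) := by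
      refine Finset.sum_congr rfl fun s _ => Finset.sum_congr rfl fun x _ => ?_
      rw [hjt]
      ring
    rw [step]
    simp only [Finset.sum_add_distrib, Finset.sum_sub_distrib, ← Finset.mul_sum]
    rw [hMI2, hEd, hsum1, hach]
    ring
  · have step : (∑ x, margX PS W x * jX x)
        = ∑ x, (margX PS W x * D x + lam * (margX PS W x * condM x)
            - lam * d * (margX PS W x)) := by
      refine Finset.sum_congr rfl fun x _ => ?_
      rw [hjX]
      ring
    rw [step]
    simp only [Finset.sum_add_distrib, Finset.sum_sub_distrib, ← Finset.mul_sum]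
    rw [hMI, hEd', hsum1', hach]
    ring
end
end

section
/- Noisy d-tilted information and dispersion for erased fair coin flips: in the erased-fair-coin-flips setting with δ/2 < d < 1/2 and λ* = −R′(d) = log( (1 − δ/2 − d)/(d − δ/2) ), the noisy d-tilted information ȷ̃_{S,X}(S, X, d) equals −λ*·d plus a random variable taking the value log( 2/(1 + exp(−λ*)) ) with probability 1 − δ (no erasure), the value λ* with probability δ/2 (erasure and reproduction disagrees with S), and the value 0 with probability δ/2 (erasure and reproduction agrees with S); consequently the noisy rate-dispersion function equals Ṽ(d) = δ(1 − δ)·log²cosh( λ*/(2 log e) ) + (δ/4)·(λ*)². -/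
open scoped BigOperators

noncomputable section

/-- Equiprobable binary source. -/
def PSb : Bool → ℝ := fun _ => 1 / 2

/-- Binary erasure channel with erasure rate `δ`; `none` is the erasure symbol `?`. -/
def Wbec (δ : ℝ) : Bool → Option Bool → ℝ :=
  fun s x => if x = some s then 1 - δ else if x = none then δ else 0

/-- Bit-error (Hamming) distortion measured against the clean source. -/
def dstH : Bool → Bool → ℝ := fun s z => if s = z then 0 else 1

/-- Distribution of the channel output `X`. -/
def PXbec (δ : ℝ) (x : Option Bool) : ℝ := ∑ s, PSb s * Wbec δ s x

/-- The optimal backward channel `P_{X|Z*}`. -/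
def backB (δ d : ℝ) : Bool → Option Bool → ℝ :=
  fun b x => if x = some b then 1 - d - δ / 2 else if x = none then δ else d - δ / 2

/-- The optimal forward test channel `Q*(z|x) = P_{Z*}(z) P_{X|Z*}(x|z) / P_X(x)`. -/
def QstBes (δ d : ℝ) : Option Bool → Bool → ℝ :=
  fun x z => (1 / 2 * backB δ d z x) / PXbec δ x

/-- Output marginal of the optimal test channel. -/
def PZstBes (δ d : ℝ) (z : Bool) : ℝ := ∑ x, PXbec δ x * QstBes δ d x z

/-- Information density `ı_{X;Z*}(x; z) = log (Q*(z|x) / P_{Z*}(z))`. -/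
def iXZ (δ d : ℝ) (x : Option Bool) (z : Bool) : ℝ :=
  Real.log (QstBes δ d x z / PZstBes δ d z)

/-- Noisy d-tilted information evaluated with the optimal reproduction:
`ȷ̃ = ı_{X;Z*}(x;z) + λ* dstH(s,z) − λ* d`. -/
def jtBes (δ d lam : ℝ) (s : Bool) (x : Option Bool) (z : Bool) : ℝ :=
  iXZ δ d x z + lam * dstH s z - lam * d

/-- Joint mass of `(S, X, Z*)` under `PSb ⊗ Wbec δ ⊗ QstBes δ d`. -/
def massBes (δ d : ℝ) (s : Bool) (x : Option Bool) (z : Bool) : ℝ :=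
  PSb s * Wbec δ s x * QstBes δ d x z

/-!
By Bayes' rule the optimal test channel maps an erasure to a uniform reproduction and
`P_{Z*}` is uniform, so on an erasure `ı_{X;Z*} = 0` and `ȷ̃ = λ* (1{S ≠ Z*} − d)`. Without
erasure `Q*(z|x) ∝ e^{−λ* 1{x ≠ z}}`, so `ı_{X;Z*}(x; z) + λ* 1{x ≠ z}` is the same constant
`log (2 / (1 + e^{−λ*}))` for both reproductions. The variance of the resulting three-point
law is `δ (1 − δ) (log (2 / (1 + e^{−λ*})) − λ*/2)² + δ λ*² / 4`, and
`λ*/2 − log (2 / (1 + e^{−λ*})) = log cosh (λ*/2)`.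
-/

namespace Real

theorem log_cosh_half (x : ℝ) :
    log (cosh (x / 2)) = x / 2 - log (2 / (1 + exp (-x))) := by
  have hcosh : cosh (x / 2) = exp (x / 2) * (1 + exp (-x)) / 2 := by
    rw [cosh_eq, show -(x / 2) = x / 2 + -x by ring, exp_add]
    ring
  have hpos : 0 < 1 + exp (-x) := by positivity
  rw [hcosh, log_div (by positivity) two_ne_zero, log_mul (exp_ne_zero _) hpos.ne', log_exp,
    log_div two_ne_zero hpos.ne']
  ring

theorem log_two_div_one_add_exp_neg_log_div {p q : ℝ} (hp : 0 < p) (hq : 0 < q) :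
    log (2 / (1 + exp (-log (q / p)))) = log (2 * q / (p + q)) := by
  rw [← log_inv, inv_div, exp_log (div_pos hp hq)]
  congr 1
  field_simp
  ring

theorem log_two_mul_div_add_eq_sub_log_div {p q : ℝ} (hp : 0 < p) (hq : 0 < q) :
    log (2 * p / (p + q)) = log (2 * q / (p + q)) - log (q / p) := by
  rw [← log_div (by positivity) (by positivity)]
  congr 1
  field_simp

end Real

theorem Fintype.sum_bool_eq_add_not {M : Type*} [AddCommMonoid M] (f : Bool → M) (b : Bool) :
    ∑ x, f x = f b + f !b := by
  cases b <;> simp [add_comm]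

section ErasedFairCoin

variable {δ d : ℝ}

theorem PXbec_none : PXbec δ none = δ := by
  simp [PXbec, PSb, Wbec]

theorem PXbec_some (b : Bool) : PXbec δ (some b) = 1 / 2 * (1 - δ) := by
  cases b <;> simp [PXbec, PSb, Wbec]

theorem PXbec_ne_zero (hδ0 : δ ≠ 0) (hδ1 : δ ≠ 1) : ∀ x, PXbec δ x ≠ 0
  | none => by rwa [PXbec_none]
  | some b => by rw [PXbec_some]; exact mul_ne_zero one_half_pos.ne' (sub_ne_zero.mpr hδ1.symm)

theorem sum_backB (b : Bool) : ∑ x, backB δ d b x = 1 := by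
  cases b <;>
    simp only [Fintype.sum_option, Fintype.sum_bool, backB, reduceCtorEq, Option.some.injEq,
      Bool.true_eq_false, Bool.false_eq_true, ↓reduceIte] <;>
    ring

theorem QstBes_none (hδ : δ ≠ 0) (z : Bool) : QstBes δ d none z = 1 / 2 := by
  rw [QstBes, PXbec_none, backB, if_neg (Option.some_ne_none z).symm, if_pos rfl, mul_div_assoc,
    div_self hδ, mul_one]

theorem QstBes_some (b z : Bool) : QstBes δ d (some b) z = backB δ d z (some b) / (1 - δ) := by
  rw [QstBes, PXbec_some, mul_div_mul_left _ _ one_half_pos.ne']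

theorem QstBes_some_self (b : Bool) :
    QstBes δ d (some b) b = (1 - δ / 2 - d) / (1 - δ) := by
  rw [QstBes_some, backB, if_pos rfl]
  ring

theorem QstBes_some_of_ne {b z : Bool} (h : z ≠ b) :
    QstBes δ d (some b) z = (d - δ / 2) / (1 - δ) := by
  simp [QstBes_some, backB, Ne.symm h]

theorem PXbec_mul_QstBes (hδ0 : δ ≠ 0) (hδ1 : δ ≠ 1) (x : Option Bool) (z : Bool) :
    PXbec δ x * QstBes δ d x z = 1 / 2 * backB δ d z x :=
  mul_div_cancel₀ _ (PXbec_ne_zero hδ0 hδ1 x)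

theorem PZstBes_eq_half (hδ0 : δ ≠ 0) (hδ1 : δ ≠ 1) (z : Bool) : PZstBes δ d z = 1 / 2 := by
  rw [PZstBes, Finset.sum_congr rfl fun x _ => PXbec_mul_QstBes hδ0 hδ1 x z, ← Finset.mul_sum,
    sum_backB, mul_one]

theorem iXZ_none (hδ0 : δ ≠ 0) (hδ1 : δ ≠ 1) (z : Bool) : iXZ δ d none z = 0 := by
  simp [iXZ, QstBes_none hδ0, PZstBes_eq_half hδ0 hδ1]

theorem iXZ_some_self (hδ0 : δ ≠ 0) (hδ1 : δ ≠ 1) (b : Bool) :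
    iXZ δ d (some b) b = Real.log (2 * (1 - δ / 2 - d) / (1 - δ)) := by
  rw [iXZ, QstBes_some_self, PZstBes_eq_half hδ0 hδ1]
  congr 1
  ring

theorem iXZ_some_of_ne (hδ0 : δ ≠ 0) (hδ1 : δ ≠ 1) {b z : Bool} (h : z ≠ b) :
    iXZ δ d (some b) z = Real.log (2 * (d - δ / 2) / (1 - δ)) := by
  rw [iXZ, QstBes_some_of_ne h, PZstBes_eq_half hδ0 hδ1]
  congr 1
  ring

theorem jtBes_some {lam : ℝ} (hδ : δ ≠ 0) (hp : δ / 2 < d) (hq : d < 1 - δ / 2)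
    (hlam : lam = Real.log ((1 - δ / 2 - d) / (d - δ / 2))) (s z : Bool) :
    jtBes δ d lam s (some s) z = -lam * d + Real.log (2 / (1 + Real.exp (-lam))) := by
  have hp' : 0 < d - δ / 2 := by linarith
  have hq' : 0 < 1 - δ / 2 - d := by linarith
  have hsum : 1 - δ = (d - δ / 2) + (1 - δ / 2 - d) := by ring
  have hδ1 : δ ≠ 1 := by intro h; linarith
  rw [hlam, Real.log_two_div_one_add_exp_neg_log_div hp' hq', ← hlam, jtBes, dstH]
  by_cases hzs : s = z
  · subst hzs
    rw [iXZ_some_self hδ hδ1, hsum, if_pos rfl]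
    ring
  · rw [iXZ_some_of_ne hδ hδ1 (Ne.symm hzs), hsum, if_neg hzs,
      Real.log_two_mul_div_add_eq_sub_log_div hp' hq', ← hlam]
    ring

theorem jtBes_none_self (hδ0 : δ ≠ 0) (hδ1 : δ ≠ 1) (lam : ℝ) (s : Bool) :
    jtBes δ d lam s none s = -lam * d := by
  simp [jtBes, iXZ_none hδ0 hδ1, dstH]

theorem jtBes_none_not (hδ0 : δ ≠ 0) (hδ1 : δ ≠ 1) (lam : ℝ) (s : Bool) :
    jtBes δ d lam s none (!s) = -lam * d + lam := by
  rw [jtBes, iXZ_none hδ0 hδ1, dstH, if_neg (Bool.self_ne_not s)]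
  ring

theorem massBes_none (hδ : δ ≠ 0) (s z : Bool) : massBes δ d s none z = δ / 4 := by
  simp only [massBes, PSb, Wbec, QstBes_none hδ, reduceCtorEq, ↓reduceIte]
  ring

theorem massBes_some_not (s z : Bool) : massBes δ d s (some !s) z = 0 := by
  simp [massBes, Wbec]

theorem massBes_some_self (hδ : δ ≠ 1) (s : Bool) :
    massBes δ d s (some s) s = (1 - δ / 2 - d) / 2 := by
  have h1δ : 1 - δ ≠ 0 := sub_ne_zero.mpr hδ.symm
  simp only [massBes, PSb, Wbec, ↓reduceIte, QstBes_some_self]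
  field_simp

theorem massBes_some_self_not (hδ : δ ≠ 1) (s : Bool) :
    massBes δ d s (some s) (!s) = (d - δ / 2) / 2 := by
  have h1δ : 1 - δ ≠ 0 := sub_ne_zero.mpr hδ.symm
  simp only [massBes, PSb, Wbec, ↓reduceIte, QstBes_some_of_ne (Bool.not_ne_self s)]
  field_simp

theorem sum_massBes_mul (hδ0 : δ ≠ 0) (hδ1 : δ ≠ 1) (f : Bool → Option Bool → Bool → ℝ) :
    ∑ s, ∑ x, ∑ z, massBes δ d s x z * f s x z
      = ∑ s, ((1 - δ / 2 - d) / 2 * f s (some s) s + (d - δ / 2) / 2 * f s (some s) (!s)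
          + δ / 4 * (f s none s + f s none (!s))) := by
  refine Finset.sum_congr rfl fun s _ => ?_
  simp only [Fintype.sum_option, Fintype.sum_bool_eq_add_not _ s, massBes_none hδ0,
    massBes_some_self hδ1, massBes_some_self_not hδ1, massBes_some_not, zero_mul, add_zero]
  ring

end ErasedFairCoin

theorem tilted_information_dispersion_erased_fair_coin_flips_general
    (δ d : ℝ) (hδ0 : 0 < δ)
    (hd1 : δ / 2 < d) (hd2 : d < 1 / 2)
    (lam : ℝ) (hlam : lam = Real.log ((1 - δ / 2 - d) / (d - δ / 2))) :
    -- value log(2/(1+exp(−λ*))) − λ* d, w.p. 1−δ (no erasure)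
    (∑ s, ∑ x, ∑ z, massBes δ d s x z *
        (if x ≠ none ∧
            jtBes δ d lam s x z = -lam * d + Real.log (2 / (1 + Real.exp (-lam)))
         then (1:ℝ) else 0)) = 1 - δ ∧
    -- value λ* − λ* d, w.p. δ/2 (erasure and reproduction disagrees with S)
    (∑ s, ∑ x, ∑ z, massBes δ d s x z *
        (if x = none ∧ s ≠ z ∧ jtBes δ d lam s x z = -lam * d + lam
         then (1:ℝ) else 0)) = δ / 2 ∧
    -- value 0 − λ* d, w.p. δ/2 (erasure and reproduction agrees with S)
    (∑ s, ∑ x, ∑ z, massBes δ d s x z *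
        (if x = none ∧ s = z ∧ jtBes δ d lam s x z = -lam * d
         then (1:ℝ) else 0)) = δ / 2 ∧
    -- the noisy rate-dispersion function Ṽ(d) = Var[ȷ̃]
    (∑ s, ∑ x, ∑ z, massBes δ d s x z * (jtBes δ d lam s x z) ^ 2)
        - (∑ s, ∑ x, ∑ z, massBes δ d s x z * jtBes δ d lam s x z) ^ 2
      = δ * (1 - δ) * Real.log (Real.cosh (lam / (2 * Real.log (Real.exp 1)))) ^ 2
        + δ / 4 * lam ^ 2 := by
  have hδ1 : δ ≠ 1 := by intro h; linarith
  have hq : d < 1 - δ / 2 := by linarith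
  simp only [sum_massBes_mul hδ0.ne' hδ1, jtBes_some hδ0.ne' hd1 hq hlam,
    jtBes_none_self hδ0.ne' hδ1, jtBes_none_not hδ0.ne' hδ1]
  rw [Real.log_exp, mul_one, Real.log_cosh_half]
  refine ⟨?_, ?_, ?_, ?_⟩ <;>
    simp only [ne_eq, reduceCtorEq, Bool.eq_not_self, not_true_eq_false, not_false_eq_true,
      true_and, false_and, and_false, ↓reduceIte, Finset.sum_const, Finset.card_univ,
      Fintype.card_bool, nsmul_eq_mul] <;>
    ring

/-- **Noisy d-tilted information and dispersion for erased fair coin flips**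
(Eqs. (44)–(46)): with `λ* = −R′(d) = log((1 − δ/2 − d)/(d − δ/2))`, the noisy d-tilted
information equals `−λ* d` plus `log(2/(1+e^{−λ*}))` with probability `1−δ` (no erasure),
`λ*` with probability `δ/2` (erasure, reproduction disagrees with `S`), and `0` with
probability `δ/2` (erasure, reproduction agrees with `S`); consequently
`Ṽ(d) = δ(1−δ) log² cosh(λ*/(2 log e)) + (δ/4) (λ*)²`. -/
theorem tilted_information_dispersion_erased_fair_coin_flips
    (δ d : ℝ) (hδ0 : 0 < δ) (hδ1 : δ < 1)
    (hd1 : δ / 2 < d) (hd2 : d < 1 / 2)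
    (lam : ℝ) (hlam : lam = Real.log ((1 - δ / 2 - d) / (d - δ / 2))) :
    -- value log(2/(1+exp(−λ*))) − λ* d, w.p. 1−δ (no erasure)
    (∑ s, ∑ x, ∑ z, massBes δ d s x z *
        (if x ≠ none ∧
            jtBes δ d lam s x z = -lam * d + Real.log (2 / (1 + Real.exp (-lam)))
         then (1:ℝ) else 0)) = 1 - δ ∧
    -- value λ* − λ* d, w.p. δ/2 (erasure and reproduction disagrees with S)
    (∑ s, ∑ x, ∑ z, massBes δ d s x z *
        (if x = none ∧ s ≠ z ∧ jtBes δ d lam s x z = -lam * d + lam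
         then (1:ℝ) else 0)) = δ / 2 ∧
    -- value 0 − λ* d, w.p. δ/2 (erasure and reproduction agrees with S)
    (∑ s, ∑ x, ∑ z, massBes δ d s x z *
        (if x = none ∧ s = z ∧ jtBes δ d lam s x z = -lam * d
         then (1:ℝ) else 0)) = δ / 2 ∧
    -- the noisy rate-dispersion function Ṽ(d) = Var[ȷ̃]
    (∑ s, ∑ x, ∑ z, massBes δ d s x z * (jtBes δ d lam s x z) ^ 2)
        - (∑ s, ∑ x, ∑ z, massBes δ d s x z * jtBes δ d lam s x z) ^ 2
      = δ * (1 - δ) * Real.log (Real.cosh (lam / (2 * Real.log (Real.exp 1)))) ^ 2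
        + δ / 4 * lam ^ 2 :=
  tilted_information_dispersion_erased_fair_coin_flips_general δ d hδ0 hd1 hd2 lam hlam
end
end
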